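/- arXiv:1405.3018 — 2 statements merged into one kernel-verified Lean document; each statement's English description precedes it below -/
import Mathlib

section
/- Assume t_0 ≠ 1 and for t ∈ (0,1) set τ_j = t^{n−j} t_0 and define the normalized Macdonald–Koornwinder quadratic norm ratio R_λ(t) = ∏_{j=1}^{n} [ (1 − τ_j² q^{2λ_j})/(1 − τ_j²) · ∏_{r=0}^{3} (t_r τ_j)_{λ_j} / (q t_r^{−1} τ_j)_{λ_j} ] · ∏_{1≤j<k≤n} [ (1 − τ_j τ_k q^{λ_j+λ_k})/(1 − τ_j τ_k) · (t τ_j τ_k)_{λ_j+λ_k} / (q t^{−1} τ_j τ_k)_{λ_j+λ_k} · (1 − τ_j τ_k^{−1} q^{λ_j−λ_k})/(1 − τ_j τ_k^{−1}) · (t τ_j τ_k^{−1})_{λ_j−λ_k} / (q t^{−1} τ_j τ_k^{−1})_{λ_j−λ_k} ]. Then for every λ ∈ Λ: lim_{t→0^+} R_λ(t) = (q t_0²)_{λ_{n−1}+λ_n}^{−1} · (1 − t_0² q^{2λ_n})/(1 − t_0²) · ∏_{r=0}^{3} (t_0 t_r)_{λ_n} / (q t_0 t_r^{−1})_{λ_n}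 · ∏_{1≤j<n} (q)_{λ_j−λ_{j+1}}^{−1}. (The t → 0 degeneration of the Macdonald–Koornwinder norm constants to the q-Whittaker norm constants.) -/
open scoped BigOperators
open MeasureTheory Filter

noncomputable section

attribute [local instance] Classical.propDecidable

/-- `lam` is a partition: weakly decreasing with nonnegative entries. -/
def IsPart {n : ℕ} (lam : Fin n → ℤ) : Prop :=
  (∀ j k : Fin n, j ≤ k → lam k ≤ lam j) ∧ ∀ j, 0 ≤ lam j

/-- hyperoctahedral dominance order (non-strict). -/
def domLE {n : ℕ} (mu lam : Fin n → ℤ) : Prop :=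
  ∀ k : Fin n, ∑ j ∈ Finset.univ.filter (fun j : Fin n => j ≤ k), mu j
             ≤ ∑ j ∈ Finset.univ.filter (fun j : Fin n => j ≤ k), lam j

/-- strict dominance order. -/
def domLT {n : ℕ} (mu lam : Fin n → ℤ) : Prop := domLE mu lam ∧ mu ≠ lam

/-- action of a signed permutation on an integer vector. -/
def signAct {n : ℕ} (σ : Equiv.Perm (Fin n)) (ε : Fin n → Bool) (v : Fin n → ℤ) :
    Fin n → ℤ := fun j => (if ε j then 1 else -1) * v (σ j)

/-- the orbit of `lam` under the hyperoctahedral group `W`, as a finite set. -/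
def Worbit {n : ℕ} (lam : Fin n → ℤ) : Finset (Fin n → ℤ) :=
  Finset.image (fun w : Equiv.Perm (Fin n) × (Fin n → Bool) => signAct w.1 w.2 lam)
    Finset.univ

/-- hyperoctahedral monomial symmetric function `m_λ`. -/
def mSym {n : ℕ} (lam : Fin n → ℤ) (ξ : Fin n → ℝ) : ℂ :=
  ∑ mu ∈ Worbit lam, Complex.exp (Complex.I * ∑ j, (mu j : ℂ) * (ξ j : ℂ))

/-- finite q-Pochhammer symbol (real). -/
def qPochR (q x : ℝ) (m : ℕ) : ℝ := ∏ l ∈ Finset.range m, (1 - x * q ^ l)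

/-- infinite q-Pochhammer symbol (complex). -/
def qPochInf (q x : ℂ) : ℂ := ∏' l : ℕ, (1 - x * q ^ l)

/-- infinite q-Pochhammer symbol (real). -/
def qPochInfR (q x : ℝ) : ℝ := ∏' l : ℕ, (1 - x * q ^ l)

/-- the weight function Δ̂. -/
def qwWeight {n : ℕ} (q : ℝ) (th : Fin 4 → ℝ) (ξ : Fin n → ℝ) : ℝ :=
  (2 * Real.pi)⁻¹ ^ n *
  (∏ p ∈ Finset.univ.filter (fun p : Fin n × Fin n => p.1 < p.2),
      ‖qPochInf (q : ℂ) (Complex.exp (Complex.I * ((ξ p.1 : ℂ) + (ξ p.2 : ℂ)))) *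
        qPochInf (q : ℂ) (Complex.exp (Complex.I * ((ξ p.1 : ℂ) - (ξ p.2 : ℂ))))‖ ^ 2) *
  ∏ j, ‖qPochInf (q : ℂ) (Complex.exp (2 * Complex.I * (ξ j : ℂ))) /
        ∏ r, qPochInf (q : ℂ) ((th r : ℂ) * Complex.exp (Complex.I * (ξ j : ℂ)))‖ ^ 2

/-- the hyperoctahedral Weyl alcove 𝔸. -/
def alcove (n : ℕ) : Set (Fin n → ℝ) :=
  {ξ | StrictAnti ξ ∧ ∀ j, 0 < ξ j ∧ ξ j < Real.pi}

/-- deformed hyperoctahedral q-Whittaker family. -/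
def IsQWhitFam {n : ℕ} (q : ℝ) (th : Fin 4 → ℝ)
    (p : (Fin n → ℤ) → (Fin n → ℝ) → ℂ) : Prop :=
  ∀ lam : Fin n → ℤ, IsPart lam →
    (∃ c : (Fin n → ℤ) → ℂ, (Function.support c).Finite ∧
        (∀ mu, c mu ≠ 0 → IsPart mu ∧ domLT mu lam) ∧
        ∀ ξ : Fin n → ℝ, p lam ξ = mSym lam ξ + ∑ᶠ mu, c mu * mSym mu ξ) ∧
    (∀ mu : Fin n → ℤ, IsPart mu → domLT mu lam →
      (∫ ξ in alcove n, p lam ξ * (starRingEnd ℂ) (mSym mu ξ) * (qwWeight q th ξ : ℂ)) = 0)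

/-- padded access to the parts of `lam` (0-indexed); out-of-range values are never used. -/
def getp {n : ℕ} (lam : Fin n → ℤ) (k : ℕ) : ℤ := if h : k < n then lam ⟨k, h⟩ else 0

/-- standard unit vector `e_j` in ℤⁿ. -/
def eVec {n : ℕ} (j : Fin n) : Fin n → ℤ := fun k => if k = j then 1 else 0

/-- `τ_j = t^{n-j} t_0` (0-indexed `j`). -/
def tauMK {n : ℕ} (tt t0 : ℝ) (j : Fin n) : ℝ := tt ^ (n - 1 - (j : ℕ)) * t0

/-- the normalized Macdonald-Koornwinder quadratic norm ratio `R_λ(t)`. -/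
def Rnorm {n : ℕ} (q t0 : ℝ) (t : Fin 4 → ℝ) (tt : ℝ) (lam : Fin n → ℤ) : ℝ :=
  (∏ j : Fin n,
      ((1 - tauMK tt t0 j ^ 2 * q ^ (2 * lam j)) / (1 - tauMK tt t0 j ^ 2) *
        ∏ r, qPochR q (t r * tauMK tt t0 j) (lam j).toNat /
             qPochR q (q * (t r)⁻¹ * tauMK tt t0 j) (lam j).toNat)) *
  ∏ pr ∈ Finset.univ.filter (fun pr : Fin n × Fin n => pr.1 < pr.2),
    ((1 - tauMK tt t0 pr.1 * tauMK tt t0 pr.2 * q ^ (lam pr.1 + lam pr.2)) /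
        (1 - tauMK tt t0 pr.1 * tauMK tt t0 pr.2) *
      (qPochR q (tt * tauMK tt t0 pr.1 * tauMK tt t0 pr.2) ((lam pr.1 + lam pr.2).toNat) /
       qPochR q (q * tt⁻¹ * tauMK tt t0 pr.1 * tauMK tt t0 pr.2) ((lam pr.1 + lam pr.2).toNat)) *
      ((1 - tauMK tt t0 pr.1 * (tauMK tt t0 pr.2)⁻¹ * q ^ (lam pr.1 - lam pr.2)) /
        (1 - tauMK tt t0 pr.1 * (tauMK tt t0 pr.2)⁻¹)) *
      (qPochR q (tt * tauMK tt t0 pr.1 * (tauMK tt t0 pr.2)⁻¹) ((lam pr.1 - lam pr.2).toNat) /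
       qPochR q (q * tt⁻¹ * tauMK tt t0 pr.1 * (tauMK tt t0 pr.2)⁻¹) ((lam pr.1 - lam pr.2).toNat)))

/-! Put `τ_j = s ^ (n-1-j) t₀`. The norm ratio factors into `D(τ_j)` for each `j` and
`P(τ_j τ_k) P(τ_j / τ_k)` for each pair `j < k`, where
`P(u) = (1 - u q^M)/(1 - u) · (s u; q)_M / (q s⁻¹ u; q)_M`. Since `D` is continuous at `0` with
`D(0) = 1`, only `τ_{n-1} = t₀` contributes to the diagonal. On the pairs, `τ_j τ_k = s^a t₀²` and
`τ_j / τ_k = s^a` with `a ≥ 1`, and `P(s^a c)` tends to `1` unless `a = 1`, where the denominator is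
the constant `(q c; q)_M`. That leaves the pair `(n-2, n-1)` in `τ_j τ_k` and the consecutive pairs
in `τ_j / τ_k`. -/

open Finset Topology

@[fun_prop]
lemma continuous_qPochR (q : ℝ) (m : ℕ) : Continuous fun x : ℝ => qPochR q x m :=
  continuous_finsetProd _ fun _ _ => by fun_prop

lemma qPochR_zero (q : ℝ) (m : ℕ) : qPochR q 0 m = 1 := by
  simp [qPochR]

def diagFactor (q : ℝ) (t : Fin 4 → ℝ) (M : ℤ) (τ : ℝ) : ℝ :=
  (1 - τ ^ 2 * q ^ (2 * M)) / (1 - τ ^ 2) *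
    ∏ r, qPochR q (t r * τ) M.toNat / qPochR q (q * (t r)⁻¹ * τ) M.toNat

def pairFactor (q : ℝ) (M : ℤ) (s u : ℝ) : ℝ :=
  (1 - u * q ^ M) / (1 - u) * (qPochR q (s * u) M.toNat / qPochR q (q * s⁻¹ * u) M.toNat)

lemma Rnorm_eq {n : ℕ} (q t0 : ℝ) (t : Fin 4 → ℝ) (s : ℝ) (lam : Fin n → ℤ) :
    Rnorm q t0 t s lam =
      (∏ j, diagFactor q t (lam j) (tauMK s t0 j)) *
        ∏ pr ∈ univ.filter (fun pr : Fin n × Fin n => pr.1 < pr.2),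
          (pairFactor q (lam pr.1 + lam pr.2) s (tauMK s t0 pr.1 * tauMK s t0 pr.2) *
            pairFactor q (lam pr.1 - lam pr.2) s (tauMK s t0 pr.1 * (tauMK s t0 pr.2)⁻¹)) := by
  simp only [Rnorm, diagFactor, pairFactor, mul_assoc]

lemma getp_val {n : ℕ} (lam : Fin n → ℤ) (j : Fin n) : getp lam j = lam j :=
  dif_pos j.isLt

lemma tendsto_diagFactor_zero (q : ℝ) (t : Fin 4 → ℝ) (M : ℤ) :
    Tendsto (diagFactor q t M) (𝓝 0) (𝓝 1) := by
  have h : ContinuousAt (diagFactor q t M) 0 := by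
    unfold diagFactor
    fun_prop (disch := simp [qPochR_zero])
  simpa [diagFactor, qPochR_zero] using h.tendsto

lemma tendsto_prod_diagFactor {m : ℕ} (q t0 : ℝ) (t : Fin 4 → ℝ) (lam : Fin (m + 1) → ℤ) :
    Tendsto (fun s => ∏ j, diagFactor q t (lam j) (tauMK s t0 j)) (𝓝 0)
      (𝓝 (diagFactor q t (lam (Fin.last m)) t0)) := by
  have hlow : ∀ i : Fin m, Tendsto (fun s => diagFactor q t (lam i.castSucc)
      (tauMK s t0 i.castSucc)) (𝓝 0) (𝓝 1) := by
    intro i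
    have hτ : Tendsto (fun s : ℝ => tauMK s t0 i.castSucc) (𝓝 0) (𝓝 0) := by
      have : Continuous fun s : ℝ => tauMK s t0 i.castSucc := by unfold tauMK; fun_prop
      simpa [tauMK, zero_pow (Nat.sub_ne_zero_of_lt i.isLt)] using this.tendsto 0
    exact (tendsto_diagFactor_zero q t _).comp hτ
  simp only [Fin.prod_univ_castSucc]
  simpa [tauMK] using (tendsto_finsetProd _ fun i _ => hlow i).mul_const
    (diagFactor q t (lam (Fin.last m)) t0)

lemma tendsto_pairFactor_pow (q c : ℝ) (M : ℤ) {a : ℕ} (ha : a ≠ 0) :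
    Tendsto (fun s => pairFactor q M s (s ^ a * c)) (𝓝[≠] 0)
      (𝓝 (if a = 1 then (qPochR q (q * c) M.toNat)⁻¹ else 1)) := by
  have hshift : (fun s => pairFactor q M s (s ^ a * c)) =ᶠ[𝓝[≠] 0] fun s =>
      (1 - s ^ a * c * q ^ M) / (1 - s ^ a * c) *
        (qPochR q (s * (s ^ a * c)) M.toNat / qPochR q (q * (s ^ (a - 1) * c)) M.toNat) := by
    filter_upwards [self_mem_nhdsWithin] with s hs
    obtain ⟨b, rfl⟩ := Nat.exists_eq_add_of_le' (Nat.one_le_iff_ne_zero.2 ha)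
    have hs' : q * s⁻¹ * (s ^ (b + 1) * c) = q * (s ^ b * c) := by
      rw [pow_succ]; field_simp [show s ≠ 0 from hs]
    simp only [pairFactor, Nat.add_sub_cancel, hs']
  refine Tendsto.congr' hshift.symm (tendsto_nhdsWithin_of_tendsto_nhds ?_)
  split_ifs with h1
  · subst h1
    -- the denominator is constant in `s`, so no nonvanishing is needed (`x / 0 = 0` on both sides)
    have h : ContinuousAt (fun s : ℝ =>
        (1 - s * c * q ^ M) / (1 - s * c) * qPochR q (s * (s * c)) M.toNat) 0 := by
      fun_prop (disch := simp)
    simpa [qPochR_zero, mul_div_assoc] using h.tendsto.div_const (qPochR q (q * c) M.toNat)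
  · have h : ContinuousAt (fun s : ℝ => (1 - s ^ a * c * q ^ M) / (1 - s ^ a * c) *
        (qPochR q (s * (s ^ a * c)) M.toNat / qPochR q (q * (s ^ (a - 1) * c)) M.toNat)) 0 := by
      fun_prop (disch := simp [qPochR_zero, zero_pow ha, zero_pow (show a - 1 ≠ 0 by omega)])
    simpa [qPochR_zero, zero_pow ha, zero_pow (show a - 1 ≠ 0 by omega)] using h.tendsto

lemma tendsto_pairFactor_tauMK {n : ℕ} (q : ℝ) {t0 : ℝ} (ht0 : t0 ≠ 0) (M₁ M₂ : ℤ)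
    {j k : Fin n} (hjk : j < k) :
    Tendsto (fun s => pairFactor q M₁ s (tauMK s t0 j * tauMK s t0 k) *
        pairFactor q M₂ s (tauMK s t0 j * (tauMK s t0 k)⁻¹)) (𝓝[≠] 0)
      (𝓝 ((if (n - 1 - j) + (n - 1 - k) = 1 then (qPochR q (q * t0 ^ 2) M₁.toNat)⁻¹ else 1) *
        (if (n - 1 - j) - (n - 1 - k) = 1 then (qPochR q (q * 1) M₂.toNat)⁻¹ else 1))) := by
  have hjk' := Fin.lt_def.1 hjk
  have hk := k.isLt
  have hprod : ∀ s, tauMK s t0 j * tauMK s t0 k = s ^ ((n - 1 - j) + (n - 1 - k)) * t0 ^ 2 := by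
    intro s
    simp only [tauMK]
    ring
  have hquot : ∀ s ≠ 0, tauMK s t0 j * (tauMK s t0 k)⁻¹ = s ^ ((n - 1 - j) - (n - 1 - k)) * 1 := by
    intro s hs
    have hsplit : n - 1 - j = (n - 1 - j) - (n - 1 - k) + (n - 1 - k) := by omega
    simp only [tauMK]
    conv_lhs => rw [hsplit, pow_add]
    field_simp
  refine Tendsto.mul ?_ ?_
  · simp only [hprod]
    exact tendsto_pairFactor_pow q _ M₁ (by omega)
  · refine Tendsto.congr' ?_ (tendsto_pairFactor_pow q 1 M₂ (by omega))
    filter_upwards [self_mem_nhdsWithin] with s hs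
    rw [hquot s hs]

lemma Fin.prod_filter_lt_eq_prod_castSucc_succ {M : Type*} [CommMonoid M] {m : ℕ}
    (f : Fin (m + 1) × Fin (m + 1) → M)
    (hf : ∀ j k : Fin (m + 1), j < k → (k : ℕ) ≠ j + 1 → f (j, k) = 1) :
    ∏ pr ∈ univ.filter (fun pr : Fin (m + 1) × Fin (m + 1) => pr.1 < pr.2), f pr =
      ∏ i : Fin m, f (i.castSucc, i.succ) := by
  rw [← prod_image (s := univ) (g := fun i : Fin m => (i.castSucc, i.succ))
    fun i _ i' _ h => Fin.castSucc_injective _ (Prod.ext_iff.1 h).1]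
  refine (prod_subset ?_ ?_).symm
  · intro pr
    simp only [mem_image, mem_univ, true_and, mem_filter]
    rintro ⟨i, rfl⟩
    exact Fin.castSucc_lt_succ
  · rintro ⟨j, k⟩ hjk hnot
    simp only [mem_filter, mem_univ, true_and] at hjk
    refine hf j k hjk fun hkj => hnot (mem_image.2 ⟨⟨j, by omega⟩, mem_univ _, ?_⟩)
    ext <;> simp [hkj]

lemma tendsto_prod_pairFactor {m : ℕ} (q : ℝ) {t0 : ℝ} (ht0 : t0 ≠ 0) (lam : Fin (m + 2) → ℤ) :
    Tendsto (fun s => ∏ pr ∈ univ.filter (fun pr : Fin (m + 2) × Fin (m + 2) => pr.1 < pr.2),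
        (pairFactor q (lam pr.1 + lam pr.2) s (tauMK s t0 pr.1 * tauMK s t0 pr.2) *
          pairFactor q (lam pr.1 - lam pr.2) s (tauMK s t0 pr.1 * (tauMK s t0 pr.2)⁻¹)))
      (𝓝[≠] 0)
      (𝓝 ((qPochR q (q * t0 ^ 2) (lam (Fin.last m).castSucc + lam (Fin.last (m + 1))).toNat)⁻¹ *
        ∏ i : Fin (m + 1), (qPochR q q (lam i.castSucc - lam i.succ).toNat)⁻¹)) := by
  have h := tendsto_finsetProd (univ.filter fun pr : Fin (m + 2) × Fin (m + 2) => pr.1 < pr.2)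
    fun pr hpr => tendsto_pairFactor_tauMK q ht0 (lam pr.1 + lam pr.2) (lam pr.1 - lam pr.2)
      (mem_filter.1 hpr).2
  convert h using 2
  rw [Fin.prod_filter_lt_eq_prod_castSucc_succ]
  · rw [prod_mul_distrib]
    congr 1
    · rw [prod_eq_single (Fin.last m) (fun i _ hi => if_neg ?_) (by simp)]
      · simp
      · have := Fin.val_lt_last hi
        simp only [Fin.val_castSucc, Fin.val_succ]
        omega
    · refine prod_congr rfl fun i _ => ?_
      have := i.isLt
      rw [if_pos (by simp only [Fin.val_castSucc, Fin.val_succ]; omega), mul_one]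
  · intro j k hjk hkj
    have := Fin.lt_def.1 hjk
    have := k.isLt
    dsimp only
    rw [if_neg (by omega), if_neg (by omega), one_mul]

theorem stmt14_general {n : ℕ} (hn : 2 ≤ n) (q : ℝ) (hq : q ∈ Set.Ioo (0 : ℝ) 1)
    (th : Fin 4 → ℝ) (hthprod : 0 < th 0 * th 1 * th 2 * th 3)
    (t0 : ℝ) (ht0 : t0 = Real.sqrt (q⁻¹ * (th 0 * th 1 * th 2 * th 3)))
    (t : Fin 4 → ℝ) (lam : Fin n → ℤ) :
    Filter.Tendsto (fun tt : ℝ => Rnorm q t0 t tt lam) (nhdsWithin 0 (Set.Ioi 0))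
      (nhds ((qPochR q (q * t0 ^ 2) ((getp lam (n - 2) + getp lam (n - 1)).toNat))⁻¹ *
        ((1 - t0 ^ 2 * q ^ (2 * getp lam (n - 1))) / (1 - t0 ^ 2)) *
        (∏ r, qPochR q (t0 * t r) ((getp lam (n - 1)).toNat) /
              qPochR q (q * t0 * (t r)⁻¹) ((getp lam (n - 1)).toNat)) *
        ∏ j ∈ Finset.range (n - 1), (qPochR q q ((getp lam j - getp lam (j + 1)).toNat))⁻¹)) := by
  obtain ⟨m, rfl⟩ := Nat.exists_eq_add_of_le' hn
  have ht0_ne : t0 ≠ 0 := by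
    rw [ht0]
    exact (Real.sqrt_pos.2 (mul_pos (inv_pos.2 hq.1) hthprod)).ne'
  have hlim := (((tendsto_prod_diagFactor q t0 t lam).mono_left nhdsWithin_le_nhds).mul
    (tendsto_prod_pairFactor q ht0_ne lam)).congr fun s => (Rnorm_eq q t0 t s lam).symm
  convert hlim.mono_left (nhdsGT_le_nhdsNE 0) using 2
  rw [show m + 2 - 2 = m by omega, show m + 2 - 1 = m + 1 by omega]
  simp only [← getp_val, Fin.val_castSucc, Fin.val_succ, Fin.val_last,
    Fin.prod_univ_eq_prod_range (fun i => (qPochR q q (getp lam i - getp lam (i + 1)).toNat)⁻¹),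
    diagFactor, mul_comm t0 (t _), mul_right_comm q t0]
  ring

/-- The `t → 0` degeneration of the Macdonald-Koornwinder norm
constants to the q-Whittaker norm constants. -/
theorem stmt14 {n : ℕ} (hn : 2 ≤ n) (q : ℝ) (hq : q ∈ Set.Ioo (0 : ℝ) 1)
    (th : Fin 4 → ℝ) (hth : ∀ r, th r ∈ Set.Ioo (-1 : ℝ) 1 ∧ th r ≠ 0)
    (hth0 : 0 < th 0) (hthprod : 0 < th 0 * th 1 * th 2 * th 3)
    (t0 : ℝ) (ht0 : t0 = Real.sqrt (q⁻¹ * (th 0 * th 1 * th 2 * th 3)))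
    (t : Fin 4 → ℝ) (ht : t 0 = t0 ∧ ∀ r : Fin 4, r ≠ 0 → t r = th 0 * th r / t0)
    (ht0ne : t0 ≠ 1)
    (lam : Fin n → ℤ) (hlam : IsPart lam) :
    Filter.Tendsto (fun tt : ℝ => Rnorm q t0 t tt lam) (nhdsWithin 0 (Set.Ioi 0))
      (nhds ((qPochR q (q * t0 ^ 2) ((getp lam (n - 2) + getp lam (n - 1)).toNat))⁻¹ *
        ((1 - t0 ^ 2 * q ^ (2 * getp lam (n - 1))) / (1 - t0 ^ 2)) *
        (∏ r, qPochR q (t0 * t r) ((getp lam (n - 1)).toNat) /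
              qPochR q (q * t0 * (t r)⁻¹) ((getp lam (n - 1)).toNat)) *
        ∏ j ∈ Finset.range (n - 1), (qPochR q q ((getp lam j - getp lam (j + 1)).toNat))⁻¹)) :=
  stmt14_general hn q hq th hthprod t0 ht0 t lam

end
end

section
/- For λ ∈ ℤ^n and ξ ∈ ℝ^n let χ_ξ(λ) = (2π)^{−n/2} i^{−n²} Σ_{w∈W} sign(w) e^{i⟨w(ρ+λ),ξ⟩}, with ρ = (n, n−1, …, 1) and sign(w) = ε_1⋯ε_n · sign(σ) for w = (σ,ε) ∈ W. Then: (i) if λ ∈ Λ and j ∈ {1,…,n} are such that λ + e_j ∉ Λ or λ − e_j ∉ Λ, then χ_ξ(λ + e_j) = 0, respectively χ_ξ(λ − e_j) = 0, for all ξ ∈ ℝ^n; and (ii) for every λ ∈ Λ and ξ ∈ ℝ^n, Σ_{1≤j≤n, λ+e_j∈Λ} χ_ξ(λ + e_j) + Σ_{1≤j≤n, λ−e_j∈Λ} χ_ξ(λ − e_j) = 2(cos ξ_1 + ⋯ + cos ξ_n) χ_ξ(λ). (The anti-invariant Fourier kernel diagonalizes the discrete Laplacian on the cone of partitions.) -/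
open scoped BigOperators
open MeasureTheory Filter

noncomputable section

attribute [local instance] Classical.propDecidable

/-- sign character of the hyperoctahedral group. -/
def signW {n : ℕ} (w : Equiv.Perm (Fin n) × (Fin n → Bool)) : ℤ :=
  (Equiv.Perm.sign w.1 : ℤ) * ∏ j, (if w.2 j then 1 else -1)

/-- the staircase vector `ρ = (n, n-1, …, 1)`. -/
def rhoV (n : ℕ) : Fin n → ℤ := fun j => (n : ℤ) - (j : ℕ)

/-- the anti-invariant Fourier kernel `χ_ξ(λ)`. -/
def chiKer {n : ℕ} (ξ : Fin n → ℝ) (lam : Fin n → ℤ) : ℂ :=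
  (((2 * Real.pi) ^ (-(n : ℝ) / 2) : ℝ) : ℂ) * Complex.I ^ (-(n ^ 2 : ℤ)) *
    ∑ w : Equiv.Perm (Fin n) × (Fin n → Bool),
      (signW w : ℂ) *
        Complex.exp (Complex.I *
          ∑ j, ((signAct w.1 w.2 (rhoV n + lam) j : ℂ) * (ξ j : ℂ)))

/-!
Write `v = ρ + λ`. Then `χ_ξ(λ)` is, up to a constant, the `W`-alternant
`∑_w sign(w) e^{i⟨w v, ξ⟩}`. It vanishes when `v` has two equal entries (a transposition
reverses the sign and fixes `v`) or a zero entry (flipping the sign of that entry does).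
Since `λ` is a partition exactly when `v` is a strict partition, and `v ± e_j` leaves the
strict partitions only through a repeated or a zero entry, this gives (i). For (ii), each
term satisfies `e^{i⟨w(v + e_k), ξ⟩} + e^{i⟨w(v - e_k), ξ⟩} = 2 cos ξ_{σ⁻¹ k} e^{i⟨w v, ξ⟩}`;
summing over `k` and `w` gives the eigenvalue equation with all `2n` neighbours, and by (i)
the neighbours outside the cone contribute nothing.
-/

def IsStrictPart {n : ℕ} (v : Fin n → ℤ) : Prop := StrictAnti v ∧ ∀ j, 0 < v j

theorem isPart_iff_isStrictPart_rhoV_add {n : ℕ} (lam : Fin n → ℤ) :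
    IsPart lam ↔ IsStrictPart (rhoV n + lam) := by
  constructor
  · rintro ⟨hanti, hnonneg⟩
    refine ⟨fun a b hab => ?_, fun j => ?_⟩
    · have := hanti a b hab.le
      have : (a : ℕ) < b := hab
      simp only [Pi.add_apply, rhoV]
      omega
    · have := hnonneg j
      have := j.isLt
      simp only [Pi.add_apply, rhoV]
      omega
  · rintro ⟨hstrict, hpos⟩
    have hanti : Antitone lam := by
      cases n with
      | zero => exact fun a => a.elim0
      | succ m =>
        refine Fin.antitone_iff_succ_le.mpr fun i => ?_
        have := hstrict (Fin.castSucc_lt_succ (i := i))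
        simp only [Pi.add_apply, rhoV, Fin.val_succ, Fin.val_castSucc] at this
        omega
    refine ⟨hanti, fun j => ?_⟩
    have hlast : (n - 1 : ℕ) < n := by have := j.isLt; omega
    have hle := hanti (show j ≤ ⟨n - 1, hlast⟩ from Nat.le_sub_one_of_lt j.isLt)
    have hlast_pos := hpos ⟨n - 1, hlast⟩
    simp only [Pi.add_apply, rhoV] at hlast_pos
    have hn : 1 ≤ n := by omega
    push_cast [hn] at hlast_pos
    linarith

theorem IsStrictPart.add_of_injective {n : ℕ} {v d : Fin n → ℤ} (hv : IsStrictPart v)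
    (hstep : ∀ a b, d b ≤ d a + 1) (hlow : ∀ k, -1 ≤ d k) (hinj : Function.Injective (v + d))
    (hne : ∀ k, (v + d) k ≠ 0) : IsStrictPart (v + d) := by
  refine ⟨Antitone.strictAnti_of_injective (fun a b hab => ?_) hinj, fun k => ?_⟩
  · rcases hab.lt_or_eq with hab | rfl
    · have := hv.1 hab
      have := hstep a b
      simp only [Pi.add_apply]
      omega
    · exact le_rfl
  · have := hv.2 k
    have := hlow k
    have := hne k
    simp only [Pi.add_apply] at this ⊢
    omega

theorem eVec_nonneg {n : ℕ} (j k : Fin n) : 0 ≤ eVec j k := by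
  unfold eVec; split_ifs <;> norm_num

theorem eVec_le_one {n : ℕ} (j k : Fin n) : eVec j k ≤ 1 := by
  unfold eVec; split_ifs <;> norm_num

theorem Fintype.sum_eq_zero_of_equiv_neg {α R : Type*} [Fintype α] [Ring R] [NoZeroDivisors R]
    [CharZero R] (e : α ≃ α) {f : α → R} (h : ∀ a, f (e a) = -f a) : ∑ a, f a = 0 := by
  refine CharZero.eq_neg_self_iff.mp ?_
  calc ∑ a, f a = ∑ a, f (e a) := (e.sum_comp f).symm
    _ = -∑ a, f a := by simp only [h, Finset.sum_neg_distrib]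

section Alternant

variable {n : ℕ}

local notation "W" => Equiv.Perm (Fin n) × (Fin n → Bool)

/-- `⟨w v, ξ⟩`. -/
def innerW (ξ : Fin n → ℝ) (w : W) (v : Fin n → ℤ) : ℂ :=
  ∑ j, (signAct w.1 w.2 v j : ℂ) * (ξ j : ℂ)

def altSum (ξ : Fin n → ℝ) (v : Fin n → ℤ) : ℂ :=
  ∑ w : W, (signW w : ℂ) * Complex.exp (Complex.I * innerW ξ w v)

theorem chiKer_eq_mul_altSum (ξ : Fin n → ℝ) (lam : Fin n → ℤ) :
    chiKer ξ lam = (((2 * Real.pi) ^ (-(n : ℝ) / 2) : ℝ) : ℂ) * Complex.I ^ (-(n ^ 2 : ℤ)) *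
      altSum ξ (rhoV n + lam) :=
  rfl

theorem altSum_eq_zero_of_equiv (ξ : Fin n → ℝ) {v : Fin n → ℤ} (e : W ≃ W)
    (hsign : ∀ w, signW (e w) = -signW w)
    (hact : ∀ w, signAct (e w).1 (e w).2 v = signAct w.1 w.2 v) : altSum ξ v = 0 :=
  Fintype.sum_eq_zero_of_equiv_neg e fun w => by
    simp only [innerW, hsign, hact]
    push_cast
    ring

theorem altSum_eq_zero_of_not_injective (ξ : Fin n → ℝ) {v : Fin n → ℤ}
    (hv : ¬Function.Injective v) : altSum ξ v = 0 := by
  obtain ⟨a, b, hvab, hab⟩ := Function.not_injective_iff.mp hv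
  have hswap : ∀ x, v (Equiv.swap a b x) = v x := fun x => by
    rw [Equiv.swap_apply_def]
    split_ifs <;> simp_all
  refine altSum_eq_zero_of_equiv ξ ((Equiv.mulLeft (Equiv.swap a b)).prodCongr (Equiv.refl _))
    (fun w => ?_) (fun w => ?_)
  · simp [signW, Equiv.Perm.sign_swap hab]
  · funext j
    simp [signAct, hswap]

theorem prod_sign_update_not (ε : Fin n → Bool) (i : Fin n) :
    ∏ j, (if Function.update ε i (!ε i) j then (1 : ℤ) else -1) =
      -∏ j, (if ε j then (1 : ℤ) else -1) := by
  rw [← Finset.mul_prod_erase _ _ (Finset.mem_univ i),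
    ← Finset.mul_prod_erase _ _ (Finset.mem_univ i), Function.update_self]
  rw [Finset.prod_congr rfl fun j hj => by rw [Function.update_of_ne (Finset.ne_of_mem_erase hj)]]
  cases ε i <;> simp

/-- Flip the sign of the entry of `w v` that is read from `v k`. -/
def flipAt (k : Fin n) : W ≃ W where
  toFun w := (w.1, Function.update w.2 (w.1.symm k) (!w.2 (w.1.symm k)))
  invFun w := (w.1, Function.update w.2 (w.1.symm k) (!w.2 (w.1.symm k)))
  left_inv w := by simp [Function.update_idem, Function.update_eq_self]
  right_inv w := by simp [Function.update_idem, Function.update_eq_self]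

theorem flipAt_apply (k : Fin n) (w : W) :
    flipAt k w = (w.1, Function.update w.2 (w.1.symm k) (!w.2 (w.1.symm k))) :=
  rfl

theorem altSum_eq_zero_of_apply_eq_zero (ξ : Fin n → ℝ) {v : Fin n → ℤ} {k : Fin n}
    (hv : v k = 0) : altSum ξ v = 0 := by
  refine altSum_eq_zero_of_equiv ξ (flipAt k) (fun w => ?_) (fun w => ?_)
  · rw [signW, signW, flipAt_apply, prod_sign_update_not]
    ring
  · funext j
    rcases eq_or_ne j (w.1.symm k) with rfl | hj
    · simp [flipAt, signAct, hv]
    · simp [flipAt, signAct, Function.update_of_ne hj]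

theorem innerW_add_eVec (ξ : Fin n → ℝ) (w : W) (v : Fin n → ℤ) (k : Fin n) :
    innerW ξ w (v + eVec k) =
      innerW ξ w v + (if w.2 (w.1.symm k) then 1 else -1) * (ξ (w.1.symm k) : ℂ) := by
  have hterm : ∀ j, (signAct w.1 w.2 (v + eVec k) j : ℂ) * (ξ j : ℂ) =
      (signAct w.1 w.2 v j : ℂ) * (ξ j : ℂ) + if j = w.1.symm k then
        (if w.2 (w.1.symm k) then 1 else -1) * (ξ (w.1.symm k) : ℂ) else 0 := fun j => by
    rcases eq_or_ne j (w.1.symm k) with rfl | hj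
    · simp only [signAct, Pi.add_apply, eVec, Equiv.apply_symm_apply, if_true]
      split_ifs <;> push_cast <;> ring
    · simp [signAct, eVec, hj, ← Equiv.eq_symm_apply]
  simp only [innerW, hterm, Finset.sum_add_distrib, Finset.sum_ite_eq', Finset.mem_univ, if_true]

theorem innerW_sub_eVec (ξ : Fin n → ℝ) (w : W) (v : Fin n → ℤ) (k : Fin n) :
    innerW ξ w (v - eVec k) =
      innerW ξ w v - (if w.2 (w.1.symm k) then 1 else -1) * (ξ (w.1.symm k) : ℂ) := by
  rw [eq_sub_iff_add_eq, ← innerW_add_eVec, sub_add_cancel]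

theorem Complex.exp_add_exp_sub_mul_I (a c : ℂ) :
    Complex.exp (Complex.I * (a + c)) + Complex.exp (Complex.I * (a - c)) =
      2 * Complex.cos c * Complex.exp (Complex.I * a) := by
  rw [Complex.two_cos, add_mul, ← Complex.exp_add, ← Complex.exp_add]
  ring_nf

theorem sum_exp_innerW_add_sub_eVec (ξ : Fin n → ℝ) (w : W) (v : Fin n → ℤ) :
    ∑ k, Complex.exp (Complex.I * innerW ξ w (v + eVec k)) +
        ∑ k, Complex.exp (Complex.I * innerW ξ w (v - eVec k)) =
      2 * (∑ j, (Real.cos (ξ j) : ℂ)) * Complex.exp (Complex.I * innerW ξ w v) := by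
  have hcos : ∀ k, Complex.cos ((if w.2 (w.1.symm k) then 1 else -1) * (ξ (w.1.symm k) : ℂ)) =
      Real.cos (ξ (w.1.symm k)) := fun k => by
    split_ifs <;> simp [Complex.ofReal_cos]
  rw [← Finset.sum_add_distrib, ← Equiv.sum_comp w.1.symm fun j => (Real.cos (ξ j) : ℂ),
    Finset.mul_sum, Finset.sum_mul]
  refine Finset.sum_congr rfl fun k _ => ?_
  rw [innerW_add_eVec, innerW_sub_eVec, Complex.exp_add_exp_sub_mul_I, hcos]

theorem altSum_add_sub_eVec (ξ : Fin n → ℝ) (v : Fin n → ℤ) :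
    ∑ k, altSum ξ (v + eVec k) + ∑ k, altSum ξ (v - eVec k) =
      2 * (∑ j, (Real.cos (ξ j) : ℂ)) * altSum ξ v := by
  simp only [altSum]
  rw [Finset.sum_comm, Finset.sum_comm (γ := Fin n), ← Finset.sum_add_distrib, Finset.mul_sum]
  refine Finset.sum_congr rfl fun w _ => ?_
  rw [← Finset.mul_sum, ← Finset.mul_sum, ← mul_add, sum_exp_innerW_add_sub_eVec]
  ring

end Alternant

theorem chiKer_add_sub_eVec {n : ℕ} (ξ : Fin n → ℝ) (lam : Fin n → ℤ) :
    ∑ j, chiKer ξ (lam + eVec j) + ∑ j, chiKer ξ (lam - eVec j) =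
      2 * (∑ j, (Real.cos (ξ j) : ℂ)) * chiKer ξ lam := by
  simp only [chiKer_eq_mul_altSum, ← add_assoc, ← add_sub_assoc, ← Finset.mul_sum, ← mul_add,
    altSum_add_sub_eVec]
  ring

theorem chiKer_add_eq_zero_of_not_isPart {n : ℕ} {lam d : Fin n → ℤ} (hlam : IsPart lam)
    (hstep : ∀ a b, d b ≤ d a + 1) (hlow : ∀ k, -1 ≤ d k) (h : ¬IsPart (lam + d))
    (ξ : Fin n → ℝ) : chiKer ξ (lam + d) = 0 := by
  rw [isPart_iff_isStrictPart_rhoV_add, ← add_assoc] at h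
  rw [isPart_iff_isStrictPart_rhoV_add] at hlam
  rw [chiKer_eq_mul_altSum, ← add_assoc]
  by_cases hinj : Function.Injective (rhoV n + lam + d)
  · obtain ⟨k, hk⟩ : ∃ k, (rhoV n + lam + d) k = 0 := by
      by_contra! hne
      exact h (hlam.add_of_injective hstep hlow hinj hne)
    rw [altSum_eq_zero_of_apply_eq_zero ξ hk, mul_zero]
  · rw [altSum_eq_zero_of_not_injective ξ hinj, mul_zero]

theorem chiKer_add_eVec_eq_zero {n : ℕ} {lam : Fin n → ℤ} (hlam : IsPart lam) {j : Fin n}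
    (h : ¬IsPart (lam + eVec j)) (ξ : Fin n → ℝ) : chiKer ξ (lam + eVec j) = 0 :=
  chiKer_add_eq_zero_of_not_isPart hlam
    (fun a b => by linarith [eVec_le_one j b, eVec_nonneg j a])
    (fun k => by linarith [eVec_nonneg j k]) h ξ

theorem chiKer_sub_eVec_eq_zero {n : ℕ} {lam : Fin n → ℤ} (hlam : IsPart lam) {j : Fin n}
    (h : ¬IsPart (lam - eVec j)) (ξ : Fin n → ℝ) : chiKer ξ (lam - eVec j) = 0 := by
  rw [sub_eq_add_neg] at h ⊢
  exact chiKer_add_eq_zero_of_not_isPart hlam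
    (fun a b => by simp only [Pi.neg_apply]; linarith [eVec_le_one j a, eVec_nonneg j b])
    (fun k => by simp only [Pi.neg_apply]; linarith [eVec_le_one j k]) h ξ

theorem stmt17_general {n : ℕ} (lam : Fin n → ℤ) (hlam : IsPart lam) :
    (∀ j : Fin n, ¬ IsPart (lam + eVec j) → ∀ ξ : Fin n → ℝ, chiKer ξ (lam + eVec j) = 0) ∧
    (∀ j : Fin n, ¬ IsPart (lam - eVec j) → ∀ ξ : Fin n → ℝ, chiKer ξ (lam - eVec j) = 0) ∧
    (∀ ξ : Fin n → ℝ,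
      (∑ j ∈ Finset.univ.filter (fun j : Fin n => IsPart (lam + eVec j)),
          chiKer ξ (lam + eVec j)) +
      (∑ j ∈ Finset.univ.filter (fun j : Fin n => IsPart (lam - eVec j)),
          chiKer ξ (lam - eVec j)) =
        2 * (∑ j, (Real.cos (ξ j) : ℂ)) * chiKer ξ lam) := by
  refine ⟨fun j h => chiKer_add_eVec_eq_zero hlam h, fun j h => chiKer_sub_eVec_eq_zero hlam h,
    fun ξ => ?_⟩
  rw [Finset.sum_filter_of_ne fun j _ => not_imp_comm.mp (chiKer_add_eVec_eq_zero hlam · ξ),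
    Finset.sum_filter_of_ne fun j _ => not_imp_comm.mp (chiKer_sub_eVec_eq_zero hlam · ξ),
    chiKer_add_sub_eVec]

/-- The anti-invariant Fourier kernel diagonalizes the discrete
Laplacian on the cone of partitions: (i) `χ_ξ` vanishes at points leaving the cone,
and (ii) the eigenvalue equation with eigenvalue `2(cos ξ_1 + ⋯ + cos ξ_n)`. -/
theorem stmt17 {n : ℕ} (hn : 1 ≤ n) (lam : Fin n → ℤ) (hlam : IsPart lam) :
    (∀ j : Fin n, ¬ IsPart (lam + eVec j) → ∀ ξ : Fin n → ℝ, chiKer ξ (lam + eVec j) = 0) ∧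
    (∀ j : Fin n, ¬ IsPart (lam - eVec j) → ∀ ξ : Fin n → ℝ, chiKer ξ (lam - eVec j) = 0) ∧
    (∀ ξ : Fin n → ℝ,
      (∑ j ∈ Finset.univ.filter (fun j : Fin n => IsPart (lam + eVec j)),
          chiKer ξ (lam + eVec j)) +
      (∑ j ∈ Finset.univ.filter (fun j : Fin n => IsPart (lam - eVec j)),
          chiKer ξ (lam - eVec j)) =
        2 * (∑ j, (Real.cos (ξ j) : ℂ)) * chiKer ξ lam) :=
  stmt17_general lam hlam
end
end
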